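/- For every modulus function γ, the γ-density topology is contained in the Lebesgue density topology: τ_γ ⊆ τ_d. Moreover, if γ satisfies Condition (A) (∀ε>0 ∃c∈(0,1) ∃δ>0 such that γ(ct)/γ(t)<ε for 0<t<δ), then τ_γ = τ_d. -/

import Mathlib

open MeasureTheory Set Filter Topology

/-- γ is a modulus function (on [0,∞); values and hypotheses only matter for nonnegative arguments). -/
def IsModulus (γ : ℝ → ℝ) : Prop :=
  (∀ a, 0 ≤ a → 0 ≤ γ a) ∧
  (∀ a, 0 ≤ a → (γ a = 0 ↔ a = 0)) ∧
  (∀ a b, 0 ≤ a → 0 ≤ b → γ (a + b) ≤ γ a + γ b) ∧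
  ContinuousWithinAt γ (Set.Ici 0) 0 ∧
  (∀ a b, 0 ≤ a → a ≤ b → γ a ≤ γ b)

/-- |(x-α, x+α) ∩ Aᶜ| -/
noncomputable def mInt (A : Set ℝ) (x α : ℝ) : ℝ :=
  (volume (Set.Ioo (x - α) (x + α) ∩ Aᶜ)).toReal

/-- x is a γ-density point of A. -/
def IsGammaDensityPt (γ : ℝ → ℝ) (A : Set ℝ) (x : ℝ) : Prop :=
  Tendsto (fun α => γ (mInt A x α) / γ (2 * α)) (𝓝[>] (0:ℝ)) (𝓝 0)

/-- x is a Lebesgue density point of A. -/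
def IsLebDensityPt (A : Set ℝ) (x : ℝ) : Prop :=
  Tendsto (fun α => mInt A x α / (2 * α)) (𝓝[>] (0:ℝ)) (𝓝 0)

/-- The γ-density family. -/
def Tgamma (γ : ℝ → ℝ) : Set (Set ℝ) :=
  {A : Set ℝ | MeasurableSet A ∧ A ⊆ {x : ℝ | IsGammaDensityPt γ A x}}

/-- The Lebesgue density family. -/
def Td : Set (Set ℝ) :=
  {A : Set ℝ | MeasurableSet A ∧ A ⊆ {x : ℝ | IsLebDensityPt A x}}

/-- Condition (A) for a modulus function. -/
def CondA (γ : ℝ → ℝ) : Prop :=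
  ∀ ε : ℝ, 0 < ε → ∃ c : ℝ, 0 < c ∧ c < 1 ∧ ∃ δ : ℝ, 0 < δ ∧
    ∀ t : ℝ, 0 < t → t < δ → γ (c * t) / γ t < ε

/-
A modulus γ is subadditive, so γ(s) ≤ N γ(ε s) whenever N ≥ 1/ε: a relative measure m/s ≥ ε of
the complement forces γ(m)/γ(s) ≥ 1/N. Hence every γ-density point is a Lebesgue density point.
Conversely, Condition (A) says γ(c s)/γ(s) is uniformly small for small s, so m/s < c forces
γ(m)/γ(s) < ε, and every Lebesgue density point is a γ-density point.
-/

namespace IsModulus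

variable {γ : ℝ → ℝ} (hγ : IsModulus γ)
include hγ

lemma nonneg {a : ℝ} (ha : 0 ≤ a) : 0 ≤ γ a := hγ.1 a ha

lemma pos {a : ℝ} (ha : 0 < a) : 0 < γ a :=
  (hγ.nonneg ha.le).lt_of_ne fun h => ha.ne' ((hγ.2.1 a ha.le).1 h.symm)

lemma mono {a b : ℝ} (ha : 0 ≤ a) (hab : a ≤ b) : γ a ≤ γ b := hγ.2.2.2.2 a b ha hab

lemma le_nat_mul (n : ℕ) {t : ℝ} (ht : 0 ≤ t) : γ (n * t) ≤ n * γ t := by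
  induction n with
  | zero => simp [(hγ.2.1 0 le_rfl).2 rfl]
  | succ n ih =>
    calc γ ((n + 1 : ℕ) * t) = γ (n * t + t) := by push_cast; ring_nf
      _ ≤ γ (n * t) + γ t := hγ.2.2.1 _ _ (by positivity) ht
      _ ≤ (n + 1 : ℕ) * γ t := by push_cast; linarith

lemma apply_le_ceil_inv_mul {ε s m : ℝ} (hε : 0 < ε) (hs : 0 < s) (hm : ε * s ≤ m) :
    γ s ≤ ⌈ε⁻¹⌉₊ * γ m := by
  have hεs : 0 ≤ ε * s := by positivity
  calc γ s ≤ γ (⌈ε⁻¹⌉₊ * (ε * s)) := by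
        refine hγ.mono hs.le ?_
        calc s = ε⁻¹ * (ε * s) := by field_simp
          _ ≤ ⌈ε⁻¹⌉₊ * (ε * s) := by gcongr; exact Nat.le_ceil _
    _ ≤ ⌈ε⁻¹⌉₊ * γ (ε * s) := hγ.le_nat_mul _ hεs
    _ ≤ ⌈ε⁻¹⌉₊ * γ m := by gcongr; exact hγ.mono hεs hm

lemma tendsto_div_of_tendsto_apply_div {ι : Type*} {l : Filter ι} {m s : ι → ℝ}
    (hm : ∀ i, 0 ≤ m i) (hs : ∀ᶠ i in l, 0 < s i)
    (h : Tendsto (fun i => γ (m i) / γ (s i)) l (𝓝 0)) :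
    Tendsto (fun i => m i / s i) l (𝓝 0) := by
  refine tendsto_order.2
    ⟨fun a ha => hs.mono fun i hi => ha.trans_le (div_nonneg (hm i) hi.le), fun ε hε => ?_⟩
  have hN : (0 : ℝ) < ⌈ε⁻¹⌉₊ := by positivity
  filter_upwards [(tendsto_order.1 h).2 _ (inv_pos.2 hN), hs] with i hi hsi
  by_contra! hεi
  have hγs := hγ.apply_le_ceil_inv_mul hε hsi ((le_div_iff₀ hsi).1 hεi)
  have : (⌈ε⁻¹⌉₊ : ℝ)⁻¹ ≤ γ (m i) / γ (s i) := by
    rwa [inv_le_iff_one_le_mul₀ hN, div_mul_eq_mul_div, le_div_iff₀ (hγ.pos hsi), one_mul,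
      mul_comm]
  linarith

lemma tendsto_apply_div_of_tendsto_div (hA : CondA γ) {ι : Type*} {l : Filter ι}
    {m s : ι → ℝ} (hm : ∀ i, 0 ≤ m i) (hs : Tendsto s l (𝓝[>] 0))
    (h : Tendsto (fun i => m i / s i) l (𝓝 0)) :
    Tendsto (fun i => γ (m i) / γ (s i)) l (𝓝 0) := by
  have hs_pos : ∀ᶠ i in l, 0 < s i := hs self_mem_nhdsWithin
  refine tendsto_order.2 ⟨fun a ha => hs_pos.mono fun i hi =>
    ha.trans_le (div_nonneg (hγ.nonneg (hm i)) (hγ.pos hi).le), fun ε hε => ?_⟩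
  obtain ⟨c, hc0, -, δ, hδ, hcδ⟩ := hA ε hε
  filter_upwards [(tendsto_order.1 h).2 c hc0, hs_pos,
    (hs.mono_right nhdsWithin_le_nhds).eventually (gt_mem_nhds hδ)] with i hi hsi hsδ
  calc γ (m i) / γ (s i) ≤ γ (c * s i) / γ (s i) := by
        gcongr
        · exact (hγ.pos hsi).le
        · exact hγ.mono (hm i) (by rw [div_lt_iff₀ hsi] at hi; linarith)
    _ < ε := hcδ _ hsi hsδ

end IsModulus

lemma mInt_nonneg (A : Set ℝ) (x α : ℝ) : 0 ≤ mInt A x α := ENNReal.toReal_nonneg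

lemma tendsto_two_mul_nhdsGT_zero : Tendsto (fun α : ℝ => 2 * α) (𝓝[>] 0) (𝓝[>] 0) := by
  refine tendsto_nhdsWithin_of_tendsto_nhds_of_eventually_within _ ?_ ?_
  · exact ((continuous_const_mul 2).tendsto' 0 0 (mul_zero 2)).mono_left nhdsWithin_le_nhds
  · exact eventually_nhdsWithin_of_forall fun α hα => mem_Ioi.2 (mul_pos two_pos hα)

lemma IsGammaDensityPt.isLebDensityPt {γ : ℝ → ℝ} (hγ : IsModulus γ) {A : Set ℝ} {x : ℝ}
    (h : IsGammaDensityPt γ A x) : IsLebDensityPt A x :=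
  hγ.tendsto_div_of_tendsto_apply_div (mInt_nonneg A x)
    (tendsto_two_mul_nhdsGT_zero self_mem_nhdsWithin) h

lemma IsLebDensityPt.isGammaDensityPt {γ : ℝ → ℝ} (hγ : IsModulus γ) (hA : CondA γ)
    {A : Set ℝ} {x : ℝ} (h : IsLebDensityPt A x) : IsGammaDensityPt γ A x :=
  hγ.tendsto_apply_div_of_tendsto_div hA (mInt_nonneg A x) tendsto_two_mul_nhdsGT_zero h

lemma Tgamma_subset_Td {γ : ℝ → ℝ} (hγ : IsModulus γ) : Tgamma γ ⊆ Td :=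
  fun _ hA => ⟨hA.1, fun _ hx => (hA.2 hx).isLebDensityPt hγ⟩

lemma Td_subset_Tgamma {γ : ℝ → ℝ} (hγ : IsModulus γ) (hA : CondA γ) : Td ⊆ Tgamma γ :=
  fun _ hB => ⟨hB.1, fun _ hx => (hB.2 hx).isGammaDensityPt hγ hA⟩

theorem stmt16 (γ : ℝ → ℝ) (hγ : IsModulus γ) :
    Tgamma γ ⊆ Td ∧ (CondA γ → Tgamma γ = Td) :=
  ⟨Tgamma_subset_Td hγ, fun hA => (Tgamma_subset_Td hγ).antisymm (Td_subset_Tgamma hγ hA)⟩
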